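/- Let (p, r²) be a weighted generator among a finite set of weighted generators in ℝ^d, and suppose every point t on the boundary of p's power cell has nonnegative power distance to (p, r²), i.e., ‖t−p‖² ≥ r². If p lies in its own power cell, then the closed ball B(p,r) is contained in p's power cell. -/
import Mathlib


open Metric

/-- If every point on the boundary of the power cell of `(p, r²)` is at distance at
least `r` from `p`, and `p` lies in its own power cell, then the closed ball
`B(p,r)` is contained in the power cell. -/
theorem ball_subset_power_cell
    (d n : ℕ) (p : EuclideanSpace ℝ (Fin d)) (r : ℝ)
    (q : Fin n → EuclideanSpace ℝ (Fin d)) (w : Fin n → ℝ)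
    (C : Set (EuclideanSpace ℝ (Fin d)))
    (hC : C = {x | ∀ j, dist x p ^ 2 - r ^ 2 ≤ dist x (q j) ^ 2 - w j})
    (hfr : ∀ t ∈ frontier C, r ≤ dist t p)
    (hp : p ∈ C) :
    closedBall p r ⊆ C := by
  have hCclosed : IsClosed C := by
    rw [hC]
    have he : {x : EuclideanSpace ℝ (Fin d) |
        ∀ j, dist x p ^ 2 - r ^ 2 ≤ dist x (q j) ^ 2 - w j}
        = ⋂ j, {x | dist x p ^ 2 - r ^ 2 ≤ dist x (q j) ^ 2 - w j} := by
      ext x; simp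
    rw [he]
    exact isClosed_iInter fun j => isClosed_le (by fun_prop) (by fun_prop)
  intro x hx
  by_contra hxC
  have hxr : dist x p ≤ r := mem_closedBall.mp hx
  have hr0 : 0 ≤ r := le_trans dist_nonneg hxr
  have hxp : x ≠ p := by rintro rfl; exact hxC hp
  have hdxp : 0 < dist x p := dist_pos.mpr hxp
  set f : ℝ → EuclideanSpace ℝ (Fin d) := fun s => p + s • (x - p) with hf
  have hfc : Continuous f := by fun_prop
  have hf0 : f 0 = p := by simp [hf]
  have hf1 : f 1 = x := by simp [hf]
  have hfd : ∀ s, 0 ≤ s → dist (f s) p = s * dist x p := by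
    intro s hs
    simp only [hf, dist_eq_norm, add_sub_cancel_left, norm_smul, Real.norm_eq_abs,
      abs_of_nonneg hs]
  set S : Set ℝ := Set.Icc 0 1 ∩ f ⁻¹' C with hS
  have hSne : (0 : ℝ) ∈ S := ⟨by norm_num, by simp [hf0, hp]⟩
  have hSbdd : BddAbove S := ⟨1, fun s hs => hs.1.2⟩
  have hSclosed : IsClosed S := isClosed_Icc.inter (hCclosed.preimage hfc)
  set s₀ : ℝ := sSup S with hs0
  have hs₀S : s₀ ∈ S := hSclosed.csSup_mem ⟨0, hSne⟩ hSbdd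
  have hs₀0 : 0 ≤ s₀ := le_csSup hSbdd hSne
  have hs₀1 : s₀ ≤ 1 := hs₀S.1.2
  have hs₀ne1 : s₀ ≠ 1 := by
    rintro h
    exact hxC (by rw [← hf1, ← h]; exact hs₀S.2)
  have hs₀lt1 : s₀ < 1 := lt_of_le_of_ne hs₀1 hs₀ne1
  -- f s₀ is on the frontier of C
  have hfront : f s₀ ∈ frontier C := by
    rw [frontier_eq_closure_inter_closure]
    constructor
    · exact subset_closure hs₀S.2
    · have htend : Filter.Tendsto f (nhdsWithin s₀ (Set.Ioi s₀)) (nhds (f s₀)) :=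
        (hfc.tendsto s₀).mono_left nhdsWithin_le_nhds
      refine mem_closure_of_tendsto htend ?_
      have hIoo : Set.Ioo s₀ 1 ∈ nhdsWithin s₀ (Set.Ioi s₀) :=
        Ioo_mem_nhdsGT_of_mem ⟨le_refl _, hs₀lt1⟩
      filter_upwards [hIoo] with s hs
      intro hsC
      have : s ∈ S := ⟨⟨le_trans hs₀0 hs.1.le, hs.2.le⟩, hsC⟩
      exact absurd (le_csSup hSbdd this) (not_le.mpr hs.1)
  have hkey : r ≤ s₀ * dist x p := by
    have := hfr _ hfront
    rwa [hfd s₀ hs₀0] at this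
  have h1 : s₀ * dist x p ≤ s₀ * r := by nlinarith
  have h2 : s₀ * r ≤ r := by nlinarith
  have hrpos : 0 < r := by
    rcases lt_or_eq_of_le hr0 with h | h
    · exact h
    · exfalso
      have : dist x p ≤ 0 := h ▸ hxr
      exact absurd this (not_le.mpr hdxp)
  have : s₀ = 1 := by nlinarith
  exact hs₀ne1 this
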